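/- Let D ⊆ ℂ be open, let 𝔣 : D → ℂ³ be smooth with 𝔣 · conj(𝔣) = 1, let γ : D → D be holomorphic, and let c : D → ℂ be smooth with |c| = 1 such that 𝔣 ∘ γ = c · 𝔣 on D. Then ξ[𝔣 ∘ γ] = γ′ · (ξ[𝔣] ∘ γ) on D, and consequently γ′ · (ξ[𝔣] ∘ γ) = c · ξ[𝔣] on D, where γ′ denotes the complex derivative of γ. -/

import Mathlib

open Complex

noncomputable section

/-- Wirtinger derivative F_z = ½(F_x − i F_y). -/
def wz {E : Type*} [NormedAddCommGroup E] [NormedSpace ℂ E] (F : ℂ → E) (p : ℂ) : E :=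
  (2 : ℂ)⁻¹ • (fderiv ℝ F p 1 - Complex.I • fderiv ℝ F p Complex.I)

/-- The bilinear dot product u · v = u₁v₁ + u₂v₂ + u₃v₃ on ℂ³. -/
def dotC (u v : Fin 3 → ℂ) : ℂ := ∑ i, u i * v i

/-- ξ[𝔣] = 𝔣_z − (𝔣_z · conj 𝔣) 𝔣. -/
def xiF (f : ℂ → Fin 3 → ℂ) (p : ℂ) : Fin 3 → ℂ :=
  wz f p - dotC (wz f p) (fun i => starRingEnd ℂ (f p i)) • f p

lemma Lsmul_decomp {E : Type*} [NormedAddCommGroup E] [NormedSpace ℝ E]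
    (L : ℂ →L[ℝ] E) (z : ℂ) : L z = z.re • L 1 + z.im • L Complex.I := by
  rw [← map_smul, ← map_smul, ← map_add]
  congr 1
  simp [Complex.real_smul, Complex.re_add_im]

lemma wz_comp (f : ℂ → Fin 3 → ℂ) (γ : ℂ → ℂ) (p : ℂ)
    (hf : DifferentiableAt ℝ f (γ p)) (hγ : DifferentiableAt ℂ γ p) :
    wz (fun q => f (γ q)) p = deriv γ p • wz f (γ p) := by
  have hγR : DifferentiableAt ℝ γ p := hγ.restrictScalars ℝ
  have hcomp : fderiv ℝ (fun q => f (γ q)) p = (fderiv ℝ f (γ p)).comp (fderiv ℝ γ p) :=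
    fderiv_comp' p hf hγR
  have hγv : ∀ v : ℂ, fderiv ℝ γ p v = deriv γ p * v := by
    intro v
    rw [hγ.fderiv_restrictScalars ℝ]
    show fderiv ℂ γ p v = deriv γ p * v
    rw [← mul_one v, ← smul_eq_mul, map_smul, fderiv_apply_one_eq_deriv]
    simp [smul_eq_mul, mul_comm]
  set L := fderiv ℝ f (γ p) with hL
  set g := deriv γ p with hg
  have h1 : fderiv ℝ (fun q => f (γ q)) p 1 = L (g * 1) := by
    rw [hcomp]; simp [hγv]
  have h2 : fderiv ℝ (fun q => f (γ q)) p Complex.I = L (g * Complex.I) := by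
    rw [hcomp]; simp [hγv]
  rw [wz, h1, h2, wz]
  rw [Lsmul_decomp L (g * 1), Lsmul_decomp L (g * Complex.I)]
  funext i
  simp only [Pi.smul_apply, Pi.sub_apply, Pi.add_apply, smul_eq_mul, Complex.real_smul]
  have hI : (Complex.I : ℂ) ^ 2 = -1 := Complex.I_sq
  have hre : ((g * 1).re : ℂ) = (g.re : ℂ) := by norm_num
  have him : ((g * 1).im : ℂ) = (g.im : ℂ) := by norm_num
  have hre2 : ((g * Complex.I).re : ℂ) = -(g.im : ℂ) := by
    norm_num [Complex.mul_re]
  have him2 : ((g * Complex.I).im : ℂ) = (g.re : ℂ) := by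
    norm_num [Complex.mul_im]
  rw [hre, him, hre2, him2]
  have hgeq : (g.re : ℂ) + (g.im : ℂ) * Complex.I = g := Complex.re_add_im g
  set a := L 1 i
  set b := L Complex.I i
  linear_combination (2⁻¹ * (a - Complex.I * b)) * hgeq + (2⁻¹ * (g.im : ℂ) * b) * hI

lemma wz_smul (c : ℂ → ℂ) (f : ℂ → Fin 3 → ℂ) (p : ℂ)
    (hc : DifferentiableAt ℝ c p) (hf : DifferentiableAt ℝ f p) :
    wz (fun q => c q • f q) p = c p • wz f p + wz c p • f p := by
  rw [wz, fderiv_fun_smul hc hf, wz, wz]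
  funext i
  simp only [ContinuousLinearMap.add_apply, ContinuousLinearMap.smul_apply,
    ContinuousLinearMap.smulRight_apply, Pi.smul_apply, Pi.sub_apply, Pi.add_apply,
    smul_eq_mul]
  ring

lemma dotC_smul_left (a : ℂ) (u v : Fin 3 → ℂ) : dotC (a • u) v = a * dotC u v := by
  simp [dotC, Finset.mul_sum, mul_assoc]

/-- If 𝔣 is a unit-sphere valued map, γ is holomorphic with γ(D) ⊆ D and
𝔣 ∘ γ = c 𝔣 with |c| = 1, then ξ[𝔣 ∘ γ] = γ′ (ξ[𝔣] ∘ γ) and consequently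
γ′ (ξ[𝔣] ∘ γ) = c ξ[𝔣] on D. -/
theorem statement19 (D : Set ℂ) (hD : IsOpen D)
    (f : ℂ → Fin 3 → ℂ) (hf : ContDiffOn ℝ (⊤ : ℕ∞) f D)
    (hunit : ∀ p ∈ D, dotC (f p) (fun i => starRingEnd ℂ (f p i)) = 1)
    (γ : ℂ → ℂ) (hγ : DifferentiableOn ℂ γ D) (hmaps : Set.MapsTo γ D D)
    (c : ℂ → ℂ) (hc : ContDiffOn ℝ (⊤ : ℕ∞) c D)
    (hc1 : ∀ p ∈ D, ‖c p‖ = 1)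
    (hfγ : ∀ p ∈ D, f (γ p) = c p • f p) :
    ∀ p ∈ D,
      xiF (fun q => f (γ q)) p = deriv γ p • xiF f (γ p) ∧
      deriv γ p • xiF f (γ p) = c p • xiF f p := by
  intro p hp
  have hpD : D ∈ nhds p := hD.mem_nhds hp
  have hfdiff : ∀ q ∈ D, DifferentiableAt ℝ f q := fun q hq =>
    (hf.contDiffAt (hD.mem_nhds hq)).differentiableAt (by simp)
  have hγp : DifferentiableAt ℂ γ p := hγ.differentiableAt hpD
  have hcp : DifferentiableAt ℝ c p := (hc.contDiffAt hpD).differentiableAt (by simp)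
  -- first equality
  have e1 : xiF (fun q => f (γ q)) p = deriv γ p • xiF f (γ p) := by
    have h1 := wz_comp f γ p (hfdiff _ (hmaps hp)) hγp
    show wz (fun q => f (γ q)) p
        - dotC (wz (fun q => f (γ q)) p) (fun i => starRingEnd ℂ (f (γ p) i)) • f (γ p)
        = deriv γ p • xiF f (γ p)
    rw [h1, dotC_smul_left, xiF, smul_sub, mul_smul]
  -- second: xiF (f ∘ γ) p = c p • xiF f p
  have hcc : c p * starRingEnd ℂ (c p) = 1 := by
    rw [Complex.mul_conj, Complex.normSq_eq_norm_sq, hc1 p hp]; norm_num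
  have heq : (fun q => f (γ q)) =ᶠ[nhds p] (fun q => c q • f q) :=
    Filter.eventuallyEq_of_mem hpD hfγ
  have hW : wz (fun q => f (γ q)) p = c p • wz f p + wz c p • f p := by
    have : wz (fun q => f (γ q)) p = wz (fun q => c q • f q) p := by
      rw [wz, wz, heq.fderiv_eq]
    rw [this, wz_smul c f p hcp (hfdiff p hp)]
  have hgp : f (γ p) = c p • f p := hfγ p hp
  set A := dotC (wz f p) (fun i => starRingEnd ℂ (f p i)) with hA
  have hdot : dotC (c p • wz f p + wz c p • f p)
      (fun i => starRingEnd ℂ ((c p • f p) i)) = A + wz c p * starRingEnd ℂ (c p) := by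
    rw [hA, dotC, dotC]
    have expand : ∀ i, ((c p • wz f p + wz c p • f p) i) *
        (starRingEnd ℂ ((c p • f p) i))
        = (c p * starRingEnd ℂ (c p)) * (wz f p i * starRingEnd ℂ (f p i))
          + (wz c p * starRingEnd ℂ (c p)) * (f p i * starRingEnd ℂ (f p i)) := by
      intro i
      simp only [Pi.add_apply, Pi.smul_apply, smul_eq_mul, map_mul]
      ring
    rw [Finset.sum_congr rfl (fun i _ => expand i)]
    rw [Finset.sum_add_distrib, ← Finset.mul_sum, ← Finset.mul_sum, hcc, one_mul]
    have hu : ∑ i, f p i * starRingEnd ℂ (f p i) = 1 := hunit p hp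
    rw [hu, mul_one]
  have e2 : xiF (fun q => f (γ q)) p = c p • xiF f p := by
    show wz (fun q => f (γ q)) p
        - dotC (wz (fun q => f (γ q)) p) (fun i => starRingEnd ℂ (f (γ p) i)) • f (γ p)
        = c p • xiF f p
    rw [hW, hgp, hdot, xiF, ← hA]
    funext i
    simp only [Pi.smul_apply, Pi.sub_apply, Pi.add_apply, smul_eq_mul]
    linear_combination (-(wz c p * f p i)) * hcc
  exact ⟨e1, e1.symm.trans e2⟩
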